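/- arXiv:1702.00919 — 2 statements merged into one kernel-verified Lean document; each statement's English description precedes it below -/
import Mathlib

section
/- Let n₁ > n₂ ≥ 0 be integers of the same parity, let m ∈ ℤ, and set μ₁ = (n₁+n₂)/2 + m − 1, μ₂ = (n₁−n₂)/2 + m − 1, μ₃ = m − (n₁−n₂)/2, μ₄ = m − (n₁+n₂)/2, and ρ = (3,2,1,0). For a permutation w ∈ S₄, define D(w) = Σ_{i=2}^{4} (i−1)·((μ+ρ)_{w^{-1}(i)} − (μ+ρ)_i). Then the minimum of D(w) over all w ∈ S₄ with w ≠ 1 equals min{n₁ − n₂, n₂ + 1}. -/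
/-!
Write `a = μ + ρ`, a strictly decreasing vector, and `σ = w⁻¹`. Abel summation turns
`D = ∑ i, i * (a (σ i) - a i)` into `∑ k, (∑ a over σ [k, n) - ∑ a over [k, n))`. Each summand is
`≥ 0`, because `[k, n)` carries the smallest entries of `a`; it is at least the smallest gap of `a`
as soon as `σ` moves `[k, n)`, which happens for some `k` when `σ ≠ 1`. The two adjacent gaps
`n₂ + 1` and `n₁ - n₂` are attained by the transpositions `(0 1)` and `(1 2)`.
-/

open Finset

section CommRing

variable {R : Type*} [CommRing R]

theorem sum_mul_sub_perm_eq_sum_Ici {n : ℕ} (a : Fin n → R) (σ : Equiv.Perm (Fin n)) :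
    ∑ i : Fin n, (i : R) * (a (σ i) - a i) =
      ∑ k, (∑ i ∈ (Ici k).map σ.toEmbedding, a i - ∑ i ∈ Ici k, a i) := by
  have hzero : ∑ i : Fin n, (a (σ i) - a i) = 0 := by
    rw [sum_sub_distrib, Equiv.sum_comp, sub_self]
  simp_rw [sum_map, ← sum_sub_distrib]
  rw [sum_comm' (t' := univ) (s' := Iic) fun k i => by
    simp only [mem_univ, true_and, and_true, mem_Ici, mem_Iic]]
  simp only [sum_const, Fin.card_Iic, nsmul_eq_mul, Nat.cast_add, Nat.cast_one, add_one_mul,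
    Equiv.coe_toEmbedding]
  rw [sum_add_distrib, hzero, add_zero]

theorem sum_mul_sub_swap {n : ℕ} (a : Fin n → R) {i j : Fin n} (hij : i ≠ j) :
    ∑ x : Fin n, (x : R) * (a (Equiv.swap i j x) - a x) = ((j : R) - i) * (a i - a j) := by
  rw [Fintype.sum_eq_add i j hij fun x hx => by
      rw [Equiv.swap_apply_of_ne_of_ne hx.1 hx.2, sub_self, mul_zero],
    Equiv.swap_apply_left, Equiv.swap_apply_right]
  ring

end CommRing

section Ordered

variable {R : Type*} [CommRing R] [LinearOrder R] [IsStrictOrderedRing R]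

theorem sum_Ici_add_le_sum_of_card_eq {ι : Type*} [LinearOrder ι] [LocallyFiniteOrderTop ι]
    {a : ι → R} {δ : R} (hδ : 0 ≤ δ) (ha : ∀ i j, i < j → δ ≤ a i - a j) {k : ι}
    {S : Finset ι} (hcard : #S = #(Ici k)) (hS : S ≠ Ici k) :
    ∑ i ∈ Ici k, a i + δ ≤ ∑ i ∈ S, a i := by
  set m := #(S \ Ici k)
  have hm : 1 ≤ m := by
    refine Nat.one_le_iff_ne_zero.mpr fun h => hS ?_
    exact eq_of_subset_of_card_le (sdiff_eq_empty_iff_subset.mp (card_eq_zero.mp h)) hcard.ge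
  -- `a k` separates the entries of `a` on `S \ Ici k` from those on `Ici k \ S`.
  have hlow : m • (a k + δ) ≤ ∑ i ∈ S \ Ici k, a i :=
    card_nsmul_le_sum _ _ _ fun i hi => by
      have : i < k := by simpa using (mem_sdiff.mp hi).2
      linarith [ha i k this]
  have hhigh : ∑ i ∈ Ici k \ S, a i ≤ m • a k := by
    rw [show m = #(Ici k \ S) from card_sdiff_comm hcard]
    refine sum_le_card_nsmul _ _ _ fun i hi => ?_
    rcases (mem_Ici.mp (mem_sdiff.mp hi).1).eq_or_lt with rfl | hki
    · exact le_rfl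
    · linarith [ha k i hki]
  have hmδ : δ ≤ m • δ := by
    simpa using nsmul_le_nsmul_left hδ hm
  have := sum_sdiff_sub_sum_sdiff (s₁ := Ici k) (s₂ := S) (f := a)
  rw [nsmul_add] at hlow
  linarith

theorem exists_apply_lt_of_ne_one {n : ℕ} {σ : Equiv.Perm (Fin n)} (hσ : σ ≠ 1) :
    ∃ k, σ k < k := by
  by_contra! h
  have hsum : ∑ k : Fin n, (k : ℕ) = ∑ k, (σ k : ℕ) := (Equiv.sum_comp σ _).symm
  rw [sum_eq_sum_iff_of_le fun k _ => Fin.le_iff_val_le_val.mp (h k)] at hsum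
  exact hσ (Equiv.ext fun k => Fin.ext (hsum k (mem_univ k)).symm)

theorem le_sum_mul_sub_perm {n : ℕ} {a : Fin n → R} {δ : R} (hδ : 0 ≤ δ)
    (ha : ∀ i j, i < j → δ ≤ a i - a j) {σ : Equiv.Perm (Fin n)} (hσ : σ ≠ 1) :
    δ ≤ ∑ i : Fin n, (i : R) * (a (σ i) - a i) := by
  set T : Fin n → R := fun k => ∑ i ∈ (Ici k).map σ.toEmbedding, a i - ∑ i ∈ Ici k, a i
  have hgap : ∀ k, (Ici k).map σ.toEmbedding ≠ Ici k → δ ≤ T k := fun k hk => by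
    linarith [sum_Ici_add_le_sum_of_card_eq hδ ha (card_map _) hk]
  obtain ⟨k, hk⟩ := exists_apply_lt_of_ne_one hσ
  have hmoved : (Ici k).map σ.toEmbedding ≠ Ici k := fun h => by
    have : σ k ∈ Ici k := h ▸ mem_map_of_mem σ.toEmbedding (mem_Ici.mpr le_rfl)
    exact (mem_Ici.mp this).not_gt hk
  rw [sum_mul_sub_perm_eq_sum_Ici]
  refine (hgap k hmoved).trans (single_le_sum (f := T) (fun j _ => ?_) (mem_univ k))
  by_cases hj : (Ici j).map σ.toEmbedding = Ici j
  · simp only [T, hj, sub_self, le_refl]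
  · exact hδ.trans (hgap j hj)

end Ordered

theorem asai_split_small_slope_general (n₁ n₂ m μ₁ μ₂ μ₃ μ₄ : ℤ)
    (hn : n₁ > n₂) (hn₂ : n₂ ≥ 0)
    (hμ₁ : 2 * μ₁ = (n₁ + n₂) + 2 * (m - 1))
    (hμ₂ : 2 * μ₂ = (n₁ - n₂) + 2 * (m - 1))
    (hμ₃ : 2 * μ₃ = 2 * m - (n₁ - n₂))
    (hμ₄ : 2 * μ₄ = 2 * m - (n₁ + n₂)) :
    IsLeast
      {d : ℤ | ∃ w : Equiv.Perm (Fin 4), w ≠ 1 ∧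
        d = ∑ i : Fin 4, (i : ℤ) *
          ((![μ₁, μ₂, μ₃, μ₄] (w⁻¹ i) + ![3, 2, 1, 0] (w⁻¹ i)) -
            (![μ₁, μ₂, μ₃, μ₄] i + ![3, 2, 1, 0] i))}
      (min (n₁ - n₂) (n₂ + 1)) := by
  set a : Fin 4 → ℤ := fun i => ![μ₁, μ₂, μ₃, μ₄] i + ![3, 2, 1, 0] i
  have hgaps : ∀ i j, i < j → min (n₁ - n₂) (n₂ + 1) ≤ a i - a j := by
    intro i j hij
    fin_cases i <;> fin_cases j <;> simp [a] at hij ⊢ <;> omega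
  refine ⟨?_, fun d ⟨w, hw, hd⟩ => hd ▸ le_sum_mul_sub_perm (by omega) hgaps (inv_ne_one.mpr hw)⟩
  obtain ⟨i, j, hij, hmin⟩ : ∃ i j : Fin 4, i ≠ j ∧
      ((j : ℤ) - i) * (a i - a j) = min (n₁ - n₂) (n₂ + 1) := by
    rcases min_choice (n₁ - n₂) (n₂ + 1) with h | h
    · exact ⟨1, 2, by decide, by simp [a, h]; omega⟩
    · exact ⟨0, 1, by decide, by simp [a, h]; omega⟩
  exact ⟨Equiv.swap i j, Equiv.swap_eq_one_iff.not.mpr hij, by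
    rw [Equiv.swap_inv, sum_mul_sub_swap a hij, hmin]⟩

/-- For the weight `μ` of the Asai transfer (split case) and
`ρ = (3,2,1,0)`, the minimum over `w ∈ S₄ \ {1}` of
`D(w) = Σᵢ (i−1)·((μ+ρ)_{w⁻¹(i)} − (μ+ρ)ᵢ)` equals `min{n₁ − n₂, n₂ + 1}`. -/
theorem asai_split_small_slope (n₁ n₂ m μ₁ μ₂ μ₃ μ₄ : ℤ)
    (hn : n₁ > n₂) (hn₂ : n₂ ≥ 0) (hpar : n₁ % 2 = n₂ % 2)
    (hμ₁ : 2 * μ₁ = (n₁ + n₂) + 2 * (m - 1))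
    (hμ₂ : 2 * μ₂ = (n₁ - n₂) + 2 * (m - 1))
    (hμ₃ : 2 * μ₃ = 2 * m - (n₁ - n₂))
    (hμ₄ : 2 * μ₄ = 2 * m - (n₁ + n₂)) :
    IsLeast
      {d : ℤ | ∃ w : Equiv.Perm (Fin 4), w ≠ 1 ∧
        d = ∑ i : Fin 4, (i : ℤ) *
          ((![μ₁, μ₂, μ₃, μ₄] (w⁻¹ i) + ![3, 2, 1, 0] (w⁻¹ i)) -
            (![μ₁, μ₂, μ₃, μ₄] i + ![3, 2, 1, 0] i))}
      (min (n₁ - n₂) (n₂ + 1)) :=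
  asai_split_small_slope_general n₁ n₂ m μ₁ μ₂ μ₃ μ₄ hn hn₂ hμ₁ hμ₂ hμ₃ hμ₄
end

section
/- Let n₁ > n₂ ≥ 0 be integers of the same parity, let m ∈ ℤ, set μ = ((n₁+n₂)/2 + m − 1, (n₁−n₂)/2 + m − 1, m − (n₁−n₂)/2, m − (n₁+n₂)/2) and ρ = (3,2,1,0). For w ∈ S₄ define D̃(w) = ((μ+ρ)_{w^{-1}(2)} − (μ+ρ)_2) + 3((μ+ρ)_{w^{-1}(3)} − (μ+ρ)_3) + 4((μ+ρ)_{w^{-1}(4)} − (μ+ρ)_4). Then the minimum of D̃(w) over w ∈ S₄ with w ≠ 1 equals min{n₂ + 1, 2(n₁ − n₂)}. -/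
/-- For the weight `μ` of the Asai transfer (inert case) and
`ρ = (3,2,1,0)`, the minimum over `w ∈ S₄ \ {1}` of
`D̃(w) = ((μ+ρ)_{w⁻¹(2)} − (μ+ρ)₂) + 3((μ+ρ)_{w⁻¹(3)} − (μ+ρ)₃) +
4((μ+ρ)_{w⁻¹(4)} − (μ+ρ)₄)` equals `min{n₂ + 1, 2(n₁ − n₂)}`. -/
theorem asai_inert_small_slope (n₁ n₂ m μ₁ μ₂ μ₃ μ₄ : ℤ)
    (hn : n₁ > n₂) (hn₂ : n₂ ≥ 0) (hpar : n₁ % 2 = n₂ % 2)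
    (hμ₁ : 2 * μ₁ = (n₁ + n₂) + 2 * (m - 1))
    (hμ₂ : 2 * μ₂ = (n₁ - n₂) + 2 * (m - 1))
    (hμ₃ : 2 * μ₃ = 2 * m - (n₁ - n₂))
    (hμ₄ : 2 * μ₄ = 2 * m - (n₁ + n₂)) :
    IsLeast
      {d : ℤ | ∃ w : Equiv.Perm (Fin 4), w ≠ 1 ∧
        d = ∑ i : Fin 4, ![0, 1, 3, 4] i *
          ((![μ₁, μ₂, μ₃, μ₄] (w⁻¹ i) + ![3, 2, 1, 0] (w⁻¹ i)) -
            (![μ₁, μ₂, μ₃, μ₄] i + ![3, 2, 1, 0] i))}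
      (min (n₂ + 1) (2 * (n₁ - n₂))) := by
  have hfin : ∀ x : Fin 4, x = 0 ∨ x = 1 ∨ x = 2 ∨ x = 3 := by decide
  constructor
  · rcases le_total (n₂ + 1) (2 * (n₁ - n₂)) with h | h
    · refine ⟨Equiv.swap 0 1, by decide, ?_⟩
      rw [min_eq_left h]
      simp [Fin.sum_univ_four, Equiv.swap_apply_def]
      omega
    · refine ⟨Equiv.swap 1 2, by decide, ?_⟩
      rw [min_eq_right h]
      simp [Fin.sum_univ_four, Equiv.swap_apply_def]
      omega
  · rintro d ⟨w, hw, rfl⟩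
    simp only [Fin.sum_univ_four]
    rcases hfin (w⁻¹ 1) with h1|h1|h1|h1 <;>
      rcases hfin (w⁻¹ 2) with h2|h2|h2|h2 <;>
      rcases hfin (w⁻¹ 3) with h3|h3|h3|h3 <;>
      first
      | (exact absurd (w⁻¹.injective (h1.trans h2.symm)) (by decide))
      | (exact absurd (w⁻¹.injective (h1.trans h3.symm)) (by decide))
      | (exact absurd (w⁻¹.injective (h2.trans h3.symm)) (by decide))
      | (exfalso; apply hw
         have h0 : w⁻¹ 0 = 0 := by
           rcases hfin (w⁻¹ 0) with h0|h0|h0|h0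
           · exact h0
           · exact absurd (w⁻¹.injective (h0.trans h1.symm)) (by decide)
           · exact absurd (w⁻¹.injective (h0.trans h2.symm)) (by decide)
           · exact absurd (w⁻¹.injective (h0.trans h3.symm)) (by decide)
         rw [← inv_eq_one]
         exact Equiv.ext fun x => by
           rcases hfin x with rfl|rfl|rfl|rfl <;> simpa using (by assumption))
      | (rw [h1, h2, h3]; simp; omega)
end
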